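/- arXiv:2505.09964 — 2 statements merged into one kernel-verified Lean document; each statement's English description precedes it below -/
import Mathlib

section
/- Let n ≥ 1 be a natural number. Then for all x > 0, w(f_n)(x) = (4n/x²) · ( f_n(x)³ − ((3n−1)/x)·f_n'(x)·f_n(x)² + ((2n² − n + x²)/x²)·f_n'(x)²·f_n(x) − ((n−1)/x)·f_n'(x)³ ). -/
/-!
`f_n` solves `x f'' = 2n f' - x f`: this follows from the recurrence
`f_{n+1} = (2n+1) f_n - x f_n'`, whose two sides have the same derivative `x f_n` and both vanish
at `0`. Differentiating the equation twice expresses `f''`, `f'''`, `f''''` at `x ≠ 0` through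
`f` and `f'` alone, and the determinant identity becomes an identity of rational functions.
-/

/-- Determinant of the 3x3 Hankel-Wronskian matrix of h (rows of 2nd..4th derivatives). -/
noncomputable def w (f : ℝ → ℝ) (x : ℝ) : ℝ :=
  Matrix.det !![deriv^[2] f x, deriv f x, f x;
    deriv^[3] f x, deriv^[2] f x, deriv f x;
    deriv^[4] f x, deriv^[3] f x, deriv^[2] f x]

/-- `fn n x = √(π/2)·x^(n+1/2)·J_(n+1/2)(x)`, via the equivalent recursive definition
`fn 0 = sin`, `fn (n+1) x = ∫_0^x t·fn n t dt`. -/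
noncomputable def fn : ℕ → ℝ → ℝ
  | 0 => fun x => Real.sin x
  | n + 1 => fun x => ∫ t in (0:ℝ)..x, t * fn n t

open scoped ContDiff

theorem mul_deriv_eq_of_forall_mul_eq {g h : ℝ → ℝ} {h' x : ℝ} (H : ∀ y, y * g y = h y)
    (hg : DifferentiableAt ℝ g x) (hh : HasDerivAt h h' x) : x * deriv g x = h' - g x := by
  rw [← funext H] at hh
  rw [hh.unique ((hasDerivAt_id' x).fun_mul hg.hasDerivAt)]; ring

theorem ContDiff.differentiable_iterate_deriv_of_lt {f : ℝ → ℝ} {n k : ℕ}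
    (hf : ContDiff ℝ n f) (hk : k < n) : Differentiable ℝ (deriv^[k] f) := by
  have : ContDiff ℝ (1 + k : ℕ) f := hf.of_le (by exact_mod_cast (show 1 + k ≤ n by omega))
  exact (this.iterate_deriv' 1 k).differentiable one_ne_zero

section SecondOrderEquation

variable {f : ℝ → ℝ} {c : ℝ}

theorem mul_iterate_deriv_three_eq (hf : ContDiff ℝ 3 f)
    (hode : ∀ y, y * deriv^[2] f y = 2 * c * deriv f y - y * f y) (x : ℝ) :
    x * deriv^[3] f x = (2 * c - 1) * deriv^[2] f x - x * deriv f x - f x := by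
  have d (k : ℕ) (hk : k < 3 := by norm_num) := hf.differentiable_iterate_deriv_of_lt hk x
  have := mul_deriv_eq_of_forall_mul_eq hode (d 2)
    (((d 1).hasDerivAt.const_mul (2 * c)).sub ((hasDerivAt_id' x).mul (d 0).hasDerivAt))
  simp only [Function.iterate_succ_apply', Function.iterate_zero_apply] at this ⊢
  linear_combination this

theorem mul_iterate_deriv_four_eq (hf : ContDiff ℝ 4 f)
    (hode : ∀ y, y * deriv^[2] f y = 2 * c * deriv f y - y * f y) (x : ℝ) :
    x * deriv^[4] f x = (2 * c - 2) * deriv^[3] f x - x * deriv^[2] f x - 2 * deriv f x := by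
  have d (k : ℕ) (hk : k < 4 := by norm_num) := hf.differentiable_iterate_deriv_of_lt hk x
  have hode3 := mul_iterate_deriv_three_eq (hf.of_le (by norm_num)) hode
  have := mul_deriv_eq_of_forall_mul_eq hode3 (d 3)
    ((((d 2).hasDerivAt.const_mul (2 * c - 1)).sub
      ((hasDerivAt_id' x).mul (d 1).hasDerivAt)).sub (d 0).hasDerivAt)
  simp only [Function.iterate_succ_apply', Function.iterate_zero_apply] at this ⊢
  linear_combination this

theorem w_eq_of_ode (hf : ContDiff ℝ 4 f)
    (hode : ∀ y, y * deriv^[2] f y = 2 * c * deriv f y - y * f y) {x : ℝ} (hx : x ≠ 0) :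
    w f x = (4 * c / x ^ 2) *
        ((f x) ^ 3 - (3 * c - 1) / x * deriv f x * (f x) ^ 2 +
          (2 * c ^ 2 - c + x ^ 2) / x ^ 2 * (deriv f x) ^ 2 * f x -
          (c - 1) / x * (deriv f x) ^ 3) := by
  have h2 : deriv^[2] f x = (2 * c * deriv f x - x * f x) / x := by
    rw [eq_div_iff hx, mul_comm]; exact hode x
  have h3 : deriv^[3] f x = ((2 * c - 1) * deriv^[2] f x - x * deriv f x - f x) / x := by
    rw [eq_div_iff hx, mul_comm]; exact mul_iterate_deriv_three_eq (hf.of_le (by norm_num)) hode x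
  have h4 : deriv^[4] f x =
      ((2 * c - 2) * deriv^[3] f x - x * deriv^[2] f x - 2 * deriv f x) / x := by
    rw [eq_div_iff hx, mul_comm]; exact mul_iterate_deriv_four_eq hf hode x
  rw [w, Matrix.det_fin_three]
  simp only [Matrix.of_apply, Matrix.cons_val', Matrix.cons_val_zero, Matrix.cons_val_fin_one,
    Matrix.cons_val_one, Matrix.cons_val]
  rw [h4, h3, h2]
  field_simp
  ring

end SecondOrderEquation

theorem continuous_fn : ∀ n, Continuous (fn n)
  | 0 => Real.continuous_sin
  | n + 1 => continuous_iff_continuousAt.2 fun x =>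
      ((continuous_id.mul (continuous_fn n)).integral_hasStrictDerivAt 0 x).hasDerivAt.continuousAt

theorem hasDerivAt_fn_succ (n : ℕ) (x : ℝ) : HasDerivAt (fn (n + 1)) (x * fn n x) x :=
  ((continuous_id.mul (continuous_fn n)).integral_hasStrictDerivAt 0 x).hasDerivAt

theorem deriv_fn_succ (n : ℕ) : deriv (fn (n + 1)) = fun x => x * fn n x :=
  funext fun x => (hasDerivAt_fn_succ n x).deriv

theorem contDiff_fn : ∀ n, ContDiff ℝ ∞ (fn n)
  | 0 => Real.contDiff_sin
  | n + 1 => contDiff_infty_iff_deriv.2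
      ⟨fun x => (hasDerivAt_fn_succ n x).differentiableAt,
        deriv_fn_succ n ▸ contDiff_id.mul (contDiff_fn n)⟩

theorem fn_apply_zero : ∀ n, fn n 0 = 0
  | 0 => Real.sin_zero
  | _ + 1 => intervalIntegral.integral_same

theorem fn_succ_eq_of_ode {n : ℕ}
    (hode : ∀ y, y * deriv^[2] (fn n) y = 2 * n * deriv (fn n) y - y * fn n y) (x : ℝ) :
    fn (n + 1) x = (2 * n + 1) * fn n x - x * deriv (fn n) x := by
  simp only [Function.iterate_succ_apply', Function.iterate_zero_apply] at hode
  have d0 : Differentiable ℝ (fn n) := (contDiff_fn n).differentiable (by simp)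
  have d1 : Differentiable ℝ (deriv (fn n)) :=
    ((contDiff_fn n).iterate_deriv 1).differentiable (by simp)
  have hg (y : ℝ) : HasDerivAt (fun y => (2 * n + 1) * fn n y - y * deriv (fn n) y)
      (y * fn n y) y :=
    (((d0 y).hasDerivAt.const_mul _).fun_sub
      ((hasDerivAt_id' y).fun_mul (d1 y).hasDerivAt)).congr_deriv (by linear_combination -hode y)
  have := intervalIntegral.integral_eq_sub_of_hasDerivAt (fun y _ => hg y)
    ((continuous_id.mul (continuous_fn n)).intervalIntegrable 0 x)
  simpa [fn, fn_apply_zero] using this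

theorem fn_ode : ∀ n x, x * deriv^[2] (fn n) x = 2 * n * deriv (fn n) x - x * fn n x
  | 0, x => by simp [fn]
  | n + 1, x => by
    have h2 : deriv^[2] (fn (n + 1)) x = fn n x + x * deriv (fn n) x := by
      simp only [Function.iterate_succ_apply', Function.iterate_zero_apply, deriv_fn_succ]
      rw [deriv_fun_mul differentiableAt_fun_id ((contDiff_fn n).differentiable (by simp) x)]
      simp
    rw [h2, deriv_fn_succ, fn_succ_eq_of_ode (fn_ode n) x]
    push_cast
    ring

theorem stmt_12_general (n : ℕ) :
    ∀ x > (0 : ℝ),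
      w (fn n) x = (4 * (n : ℝ) / x ^ 2) *
        ((fn n x) ^ 3 - (3 * (n : ℝ) - 1) / x * deriv (fn n) x * (fn n x) ^ 2 +
          (2 * (n : ℝ) ^ 2 - (n : ℝ) + x ^ 2) / x ^ 2 * (deriv (fn n) x) ^ 2 * fn n x -
          ((n : ℝ) - 1) / x * (deriv (fn n) x) ^ 3) :=
  fun _ hx => w_eq_of_ode (contDiff_infty.1 (contDiff_fn n) 4) (fn_ode n) hx.ne'

theorem stmt_12 (n : ℕ) (hn : 1 ≤ n) :
    ∀ x > (0 : ℝ),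
      w (fn n) x = (4 * (n : ℝ) / x ^ 2) *
        ((fn n x) ^ 3 - (3 * (n : ℝ) - 1) / x * deriv (fn n) x * (fn n x) ^ 2 +
          (2 * (n : ℝ) ^ 2 - (n : ℝ) + x ^ 2) / x ^ 2 * (deriv (fn n) x) ^ 2 * fn n x -
          ((n : ℝ) - 1) / x * (deriv (fn n) x) ^ 3) :=
  stmt_12_general n
end

section
/- Let p be a three times continuously differentiable real function on an interval (a,b) with p'(x) ≠ 0 for all x in (a,b), let q be a real constant, and let f be a solution of f'' + p·f' + q·f = 0 on (a,b). Then the identity w(f)' + (3/2)·(p − p''/p')·w(f) = p'·f'·V holds on (a,b), where V := ( (1/2)·(p'·p − p'')·f + p'·f' )·f' − ( (1/2)·p² − p' − 2q + p'''/p' − (3/2)·(p'')²/(p')² )·v(f). -/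
/-!
Differentiating the determinant `w h` row by row, the first two rows contribute determinants
with a repeated row, so `(w h)'` is the same determinant with last row `(h⁽⁵⁾, h⁽⁴⁾, h''')`.
Differentiating the equation three times expresses `f'', …, f⁽⁵⁾` as linear combinations of `f`
and `f'` with coefficients polynomial in `p, …, p'''` and `q`; after this substitution the
claim is an identity of rational functions with denominator a power of `p'`.
-/

/-- v h = (deriv h)^2 - (second derivative of h) * h. -/
noncomputable def v (f : ℝ → ℝ) (x : ℝ) : ℝ := (deriv f x) ^ 2 - deriv^[2] f x * f x

open Set Filter Matrix

theorem ContDiffOn.iterate_deriv_of_isOpen {f : ℝ → ℝ} {s : Set ℝ} (hs : IsOpen s) (n : ℕ) :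
    ∀ k : ℕ, ContDiffOn ℝ (n + k : ℕ) f s → ContDiffOn ℝ n (deriv^[k] f) s
  | 0, hf => hf
  | k + 1, hf => ContDiffOn.iterate_deriv_of_isOpen hs n k <|
      hf.deriv_of_isOpen hs (by push_cast; rw [add_assoc])

theorem ContDiffOn.hasDerivAt_iterate_deriv {f : ℝ → ℝ} {s : Set ℝ} {n k : ℕ}
    (hf : ContDiffOn ℝ n f s) (hs : IsOpen s) (hk : k < n) {x : ℝ} (hx : x ∈ s) :
    HasDerivAt (deriv^[k] f) (deriv^[k + 1] f x) x := by
  have hfk : ContDiffOn ℝ 1 (deriv^[k] f) s :=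
    ContDiffOn.iterate_deriv_of_isOpen hs 1 k (hf.of_le (by norm_cast; omega))
  rw [Function.iterate_succ_apply']
  exact ((hfk.differentiableOn one_ne_zero).differentiableAt (hs.mem_nhds hx)).hasDerivAt

theorem HasDerivAt.eq_zero_of_eqOn_zero {g : ℝ → ℝ} {g' x : ℝ} {s : Set ℝ} (hs : IsOpen s)
    (hg : EqOn g 0 s) (hx : x ∈ s) (h : HasDerivAt g g' x) : g' = 0 :=
  h.unique <| (hasDerivAt_const x 0).congr_of_eventuallyEq <|
    eventually_of_mem (hs.mem_nhds hx) hg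

theorem hasDerivAt_w {h : ℝ → ℝ} {s : Set ℝ} (hh : ContDiffOn ℝ 5 h s) (hs : IsOpen s) {x : ℝ}
    (hx : x ∈ s) :
    HasDerivAt (w h)
      (!![deriv^[2] h x, deriv h x, h x;
        deriv^[3] h x, deriv^[2] h x, deriv h x;
        deriv^[5] h x, deriv^[4] h x, deriv^[3] h x].det) x := by
  have d k (hk : k < 5) := hh.hasDerivAt_iterate_deriv hs hk hx
  have d0 := d 0 (by norm_num)
  have d1 := d 1 (by norm_num)
  have d2 := d 2 (by norm_num)
  have d3 := d 3 (by norm_num)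
  have d4 := d 4 (by norm_num)
  have hd := (((((d2.mul d2).mul d2).sub ((d2.mul d1).mul d3)).sub ((d1.mul d3).mul d2)).add
    ((d1.mul d1).mul d4)).add ((d0.mul d3).mul d3) |>.sub ((d0.mul d2).mul d4)
  have hw : w h =
      deriv^[2] h * deriv^[2] h * deriv^[2] h - deriv^[2] h * deriv^[1] h * deriv^[3] h -
      deriv^[1] h * deriv^[3] h * deriv^[2] h + deriv^[1] h * deriv^[1] h * deriv^[4] h +
      deriv^[0] h * deriv^[3] h * deriv^[3] h - deriv^[0] h * deriv^[2] h * deriv^[4] h := by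
    funext y
    simp [w, det_fin_three]
  rw [hw]
  refine hd.congr_deriv ?_
  simp only [Nat.reduceAdd, Function.iterate_one, Function.iterate_zero, id_eq, Pi.mul_apply,
    det_fin_three, of_apply, cons_val', cons_val_zero, cons_val_fin_one, cons_val_one, cons_val]
  ring

section SecondOrderODE

variable {p f : ℝ → ℝ} {q : ℝ} {s : Set ℝ}

theorem ode_deriv_one (hs : IsOpen s) (hp : ContDiffOn ℝ 1 p s) (hf : ContDiffOn ℝ 3 f s)
    (hode : ∀ x ∈ s, deriv^[2] f x + p x * deriv f x + q * f x = 0) :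
    ∀ x ∈ s, deriv^[3] f x + deriv p x * deriv f x + p x * deriv^[2] f x + q * deriv f x = 0 := by
  intro x hx
  have dp k (hk : k < 1) := hp.hasDerivAt_iterate_deriv hs hk hx
  have df k (hk : k < 3) := hf.hasDerivAt_iterate_deriv hs hk hx
  have hzero := ((df 2 (by norm_num)).add ((dp 0 (by norm_num)).mul (df 1 (by norm_num)))).add
    ((df 0 (by norm_num)).const_mul q) |>.eq_zero_of_eqOn_zero hs hode hx
  simp only [Function.iterate_zero, id, zero_add, Function.iterate_one, Nat.reduceAdd] at hzero
  linear_combination hzero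

theorem ode_deriv_two (hs : IsOpen s) (hp : ContDiffOn ℝ 2 p s) (hf : ContDiffOn ℝ 4 f s)
    (hode : ∀ x ∈ s, deriv^[2] f x + p x * deriv f x + q * f x = 0) :
    ∀ x ∈ s, deriv^[4] f x + deriv^[2] p x * deriv f x + 2 * deriv p x * deriv^[2] f x +
      p x * deriv^[3] f x + q * deriv^[2] f x = 0 := by
  have hprev := ode_deriv_one hs (hp.of_le (by norm_num)) (hf.of_le (by norm_num)) hode
  intro x hx
  have dp k (hk : k < 2) := hp.hasDerivAt_iterate_deriv hs hk hx
  have df k (hk : k < 4) := hf.hasDerivAt_iterate_deriv hs hk hx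
  have hzero := ((((df 3 (by norm_num)).add ((dp 1 (by norm_num)).mul (df 1 (by norm_num)))).add
    ((dp 0 (by norm_num)).mul (df 2 (by norm_num)))).add ((df 1 (by norm_num)).const_mul q))
    |>.eq_zero_of_eqOn_zero hs hprev hx
  simp only [Function.iterate_zero, id, zero_add, Function.iterate_one, Nat.reduceAdd] at hzero
  linear_combination hzero

theorem ode_deriv_three (hs : IsOpen s) (hp : ContDiffOn ℝ 3 p s) (hf : ContDiffOn ℝ 5 f s)
    (hode : ∀ x ∈ s, deriv^[2] f x + p x * deriv f x + q * f x = 0) :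
    ∀ x ∈ s, deriv^[5] f x + deriv^[3] p x * deriv f x + 3 * deriv^[2] p x * deriv^[2] f x +
      3 * deriv p x * deriv^[3] f x + p x * deriv^[4] f x + q * deriv^[3] f x = 0 := by
  have hprev := ode_deriv_two hs (hp.of_le (by norm_num)) (hf.of_le (by norm_num)) hode
  intro x hx
  have dp k (hk : k < 3) := hp.hasDerivAt_iterate_deriv hs hk hx
  have df k (hk : k < 5) := hf.hasDerivAt_iterate_deriv hs hk hx
  have hzero := (((((df 4 (by norm_num)).add ((dp 2 (by norm_num)).mul (df 1 (by norm_num)))).add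
    (((dp 1 (by norm_num)).const_mul 2).mul (df 2 (by norm_num)))).add
    ((dp 0 (by norm_num)).mul (df 3 (by norm_num)))).add ((df 2 (by norm_num)).const_mul q))
    |>.eq_zero_of_eqOn_zero hs hprev hx
  simp only [Function.iterate_zero, id, zero_add, Function.iterate_one, Nat.reduceAdd] at hzero
  linear_combination hzero

end SecondOrderODE

theorem hankel_det_identity_of_ode {q p₀ p₁ p₂ p₃ f₀ f₁ f₂ f₃ f₄ f₅ : ℝ} (hp₁ : p₁ ≠ 0)
    (h₂ : f₂ + p₀ * f₁ + q * f₀ = 0) (h₃ : f₃ + p₁ * f₁ + p₀ * f₂ + q * f₁ = 0)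
    (h₄ : f₄ + p₂ * f₁ + 2 * p₁ * f₂ + p₀ * f₃ + q * f₂ = 0)
    (h₅ : f₅ + p₃ * f₁ + 3 * p₂ * f₂ + 3 * p₁ * f₃ + p₀ * f₄ + q * f₃ = 0) :
    !![f₂, f₁, f₀; f₃, f₂, f₁; f₅, f₄, f₃].det +
        3 / 2 * (p₀ - p₂ / p₁) * !![f₂, f₁, f₀; f₃, f₂, f₁; f₄, f₃, f₂].det =
      p₁ * f₁ * ((1 / 2 * (p₁ * p₀ - p₂) * f₀ + p₁ * f₁) * f₁ -
        (1 / 2 * p₀ ^ 2 - p₁ - 2 * q + p₃ / p₁ - 3 / 2 * p₂ ^ 2 / p₁ ^ 2) *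
          (f₁ ^ 2 - f₂ * f₀)) := by
  obtain rfl : f₅ = -(p₃ * f₁ + 3 * p₂ * f₂ + 3 * p₁ * f₃ + p₀ * f₄ + q * f₃) := by
    linear_combination h₅
  obtain rfl : f₄ = -(p₂ * f₁ + 2 * p₁ * f₂ + p₀ * f₃ + q * f₂) := by linear_combination h₄
  obtain rfl : f₃ = -(p₁ * f₁ + p₀ * f₂ + q * f₁) := by linear_combination h₃
  obtain rfl : f₂ = -(p₀ * f₁ + q * f₀) := by linear_combination h₂
  simp only [det_fin_three, of_apply, cons_val', cons_val_zero, cons_val_fin_one, cons_val_one,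
    cons_val]
  field_simp
  ring

theorem stmt_15_general (a b : ℝ) (p f : ℝ → ℝ) (q : ℝ)
    (hp : ContDiffOn ℝ 3 p (Set.Ioo a b))
    (hp' : ∀ x ∈ Set.Ioo a b, deriv p x ≠ 0)
    (hf : ContDiffOn ℝ 5 f (Set.Ioo a b))
    (hode : ∀ x ∈ Set.Ioo a b, deriv^[2] f x + p x * deriv f x + q * f x = 0) :
    ∀ x ∈ Set.Ioo a b,
      deriv (w f) x + (3 / 2) * (p x - deriv^[2] p x / deriv p x) * w f x =
        deriv p x * deriv f x *
          (((1 / 2) * (deriv p x * p x - deriv^[2] p x) * f x + deriv p x * deriv f x) *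
              deriv f x -
            ((1 / 2) * (p x) ^ 2 - deriv p x - 2 * q + deriv^[3] p x / deriv p x -
              (3 / 2) * (deriv^[2] p x) ^ 2 / (deriv p x) ^ 2) * v f x) := by
  intro x hx
  have hs : IsOpen (Ioo a b) := isOpen_Ioo
  rw [(hasDerivAt_w hf hs hx).deriv]
  exact hankel_det_identity_of_ode (hp' x hx) (hode x hx)
    (ode_deriv_one hs (hp.of_le (by norm_num)) (hf.of_le (by norm_num)) hode x hx)
    (ode_deriv_two hs (hp.of_le (by norm_num)) (hf.of_le (by norm_num)) hode x hx)
    (ode_deriv_three hs hp hf hode x hx)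

theorem stmt_15 (a b : ℝ) (hab : a < b) (p f : ℝ → ℝ) (q : ℝ)
    (hp : ContDiffOn ℝ 3 p (Set.Ioo a b))
    (hp' : ∀ x ∈ Set.Ioo a b, deriv p x ≠ 0)
    (hf : ContDiffOn ℝ 5 f (Set.Ioo a b))
    (hode : ∀ x ∈ Set.Ioo a b, deriv^[2] f x + p x * deriv f x + q * f x = 0) :
    ∀ x ∈ Set.Ioo a b,
      deriv (w f) x + (3 / 2) * (p x - deriv^[2] p x / deriv p x) * w f x =
        deriv p x * deriv f x *
          (((1 / 2) * (deriv p x * p x - deriv^[2] p x) * f x + deriv p x * deriv f x) *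
              deriv f x -
            ((1 / 2) * (p x) ^ 2 - deriv p x - 2 * q + deriv^[3] p x / deriv p x -
              (3 / 2) * (deriv^[2] p x) ^ 2 / (deriv p x) ^ 2) * v f x) :=
  stmt_15_general a b p f q hp hp' hf hode
end
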